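/- Let 0 → L → M → N → 0 be a short exact sequence of R-modules. If L and N are (FP)_n, then M is (FP)_n. -/

import Mathlib

open CategoryTheory Opposite TensorProduct

universe u

namespace AB

/-- `M` is `(FP)ₙ`: there is an exact sequence `Fₙ → ⋯ → F₀ → M → 0`
with each `Fᵢ` finitely generated free.  Equivalently (the form used here),
`(FP)₀` means finitely generated, and `M` is `(FP)_{n+1}` iff there is a
surjection from a finitely generated free module whose kernel is `(FP)ₙ`. -/
def IsFP (R : Type u) [CommRing R] : ℕ → ModuleCat.{u} R → Prop
  | 0, M => Module.Finite R M
  | n + 1, M => ∃ (k : ℕ) (f : (Fin k → R) →ₗ[R] M), Function.Surjective f ∧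
      IsFP R n (ModuleCat.of R (LinearMap.ker f))

/-- `M` is `(FP)_∞`. -/
def IsFPInf (R : Type u) [CommRing R] (M : ModuleCat.{u} R) : Prop := ∀ n, IsFP R n M

/-- `Ext^i_R(M, N)` as a type. -/
noncomputable abbrev ext (R : Type u) [CommRing R] (M N : ModuleCat.{u} R) (i : ℕ) :=
  ((Ext R (ModuleCat.{u} R) i).obj (op M)).obj N

/-- `Ext^i_R(M, N) = 0`. -/
def extZero (R : Type u) [CommRing R] (M N : ModuleCat.{u} R) (i : ℕ) : Prop :=
  Subsingleton (ext R M N i)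

/-- membership in the G-class `G(R)`. -/
def MemG (R : Type u) [CommRing R] (M : ModuleCat.{u} R) : Prop :=
  Module.Finite R M ∧ Module.IsReflexive R M ∧
    (∀ i > 0, extZero R M (ModuleCat.of R R) i) ∧
    (∀ i > 0, extZero R (ModuleCat.of R (Module.Dual R M)) (ModuleCat.of R R) i)

/-- membership in the restricted G-class `G̃(R)`. -/
def MemGtilde (R : Type u) [CommRing R] (M : ModuleCat.{u} R) : Prop :=
  MemG R M ∧ IsFPInf R M ∧ IsFPInf R (ModuleCat.of R (Module.Dual R M))

/-- `Gdim_R M ≤ n`. -/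
def GDimLe (R : Type u) [CommRing R] : ℕ → ModuleCat.{u} R → Prop
  | 0, M => MemG R M
  | n + 1, M => ∃ (G : ModuleCat.{u} R) (f : G →ₗ[R] M), MemG R G ∧ Function.Surjective f ∧
      GDimLe R n (ModuleCat.of R (LinearMap.ker f))

/-- `G̃dim_R M ≤ n`. -/
def GtildeDimLe (R : Type u) [CommRing R] : ℕ → ModuleCat.{u} R → Prop
  | 0, M => MemGtilde R M
  | n + 1, M => ∃ (G : ModuleCat.{u} R) (f : G →ₗ[R] M), MemGtilde R G ∧ Function.Surjective f ∧
      GtildeDimLe R n (ModuleCat.of R (LinearMap.ker f))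

/-- `pd_R M ≤ n`. -/
def ProjDimLe (R : Type u) [CommRing R] : ℕ → ModuleCat.{u} R → Prop
  | 0, M => Module.Projective R M
  | n + 1, M => ∃ (P : ModuleCat.{u} R) (f : P →ₗ[R] M), Module.Projective R P ∧
      Function.Surjective f ∧ ProjDimLe R n (ModuleCat.of R (LinearMap.ker f))

/-- The G-dimension of `M`, as an element of `ℕ∞` (`⊤` meaning `Gdim` is infinite/undefined). -/
noncomputable def GDim (R : Type u) [CommRing R] (M : ModuleCat.{u} R) : ℕ∞ :=
  sInf {n : ℕ∞ | ∃ m : ℕ, n = m ∧ GDimLe R m M}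

/-- The restricted G-dimension of `M`, as an element of `ℕ∞`. -/
noncomputable def GtildeDim (R : Type u) [CommRing R] (M : ModuleCat.{u} R) : ℕ∞ :=
  sInf {n : ℕ∞ | ∃ m : ℕ, n = m ∧ GtildeDimLe R m M}

/-- The projective dimension of `M`, as an element of `ℕ∞`. -/
noncomputable def ProjDim (R : Type u) [CommRing R] (M : ModuleCat.{u} R) : ℕ∞ :=
  sInf {n : ℕ∞ | ∃ m : ℕ, n = m ∧ ProjDimLe R m M}

/-- The classical depth of `N` with respect to the ideal `I`: the supremum of the
lengths of regular sequences on `N` contained in `I`. -/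
noncomputable def cdepth (S : Type u) [CommRing S] (I : Ideal S) (N : Type u)
    [AddCommGroup N] [Module S N] : ℕ∞ :=
  ⨆ rs : {l : List S // (∀ r ∈ l, r ∈ I) ∧ RingTheory.Sequence.IsRegular N l},
    (rs.1.length : ℕ∞)

/-- A bundled faithfully flat (commutative) algebra extension of `R`. -/
structure FFExt (R : Type u) [CommRing R] where
  S : Type u
  [ring : CommRing S]
  [alg : Algebra R S]
  faithfullyFlat : Module.FaithfullyFlat R S

attribute [instance] FFExt.ring FFExt.alg

/-- The depth of a module `M` over a quasi-local ring `R`: the supremum, over all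
faithfully flat extensions `S` of `R`, of the classical depth of `M ⊗_R S` with
respect to `mS`. -/
noncomputable def depth (R : Type u) [CommRing R] [IsLocalRing R] (M : Type u)
    [AddCommGroup M] [Module R M] : ℕ∞ :=
  ⨆ E : FFExt R,
    cdepth E.S (Ideal.map (algebraMap R E.S) (IsLocalRing.maximalIdeal R))
      (TensorProduct R E.S M)

end AB

private lemma isFP_congr (R : Type u) [CommRing R] (n : ℕ) :
    ∀ (A B : Type u) [AddCommGroup A] [AddCommGroup B] [Module R A] [Module R B]
      (_ : A ≃ₗ[R] B), AB.IsFP R n (ModuleCat.of R A) → AB.IsFP R n (ModuleCat.of R B) := by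
  induction n with
  | zero =>
    intro A B _ _ _ _ e h
    have : Module.Finite R A := h
    exact Module.Finite.equiv e
  | succ n ih =>
    intro A B _ _ _ _ e h
    obtain ⟨k, f, hs, hk⟩ := h
    refine ⟨k, e.toLinearMap ∘ₗ f, e.surjective.comp hs, ?_⟩
    have hker : LinearMap.ker (e.toLinearMap ∘ₗ f) = LinearMap.ker f := by
      rw [LinearMap.ker_comp, LinearEquiv.ker, Submodule.comap_bot]
    rw [hker]
    exact hk

private lemma fp_of_ses_aux (R : Type u) [CommRing R] (n : ℕ) :
    ∀ (L M N : Type u) [AddCommGroup L] [AddCommGroup M] [AddCommGroup N]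
      [Module R L] [Module R M] [Module R N]
      (f : L →ₗ[R] M) (g : M →ₗ[R] N),
      Function.Injective f → Function.Surjective g →
      LinearMap.range f = LinearMap.ker g →
      AB.IsFP R n (ModuleCat.of R L) → AB.IsFP R n (ModuleCat.of R N) →
      AB.IsFP R n (ModuleCat.of R M) := by
  induction n with
  | zero =>
    intro L M N _ _ _ _ _ _ f g hf hg hfg hL hN
    have hL' : AB.IsFP R 0 (ModuleCat.of R L) := hL
    have hN' : AB.IsFP R 0 (ModuleCat.of R N) := hN
    have : Module.Finite R L := hL'
    have : Module.Finite R N := hN'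
    show Module.Finite R M
    constructor
    apply Submodule.fg_of_fg_map_of_fg_inf_ker g
    · rw [Submodule.map_top, LinearMap.range_eq_top.mpr hg]
      exact Module.Finite.fg_top
    · rw [top_inf_eq, ← hfg, LinearMap.range_eq_map]
      exact (Module.Finite.fg_top (R := R) (M := L)).map f
  | succ n ih =>
    intro L M N _ _ _ _ _ _ f g hf hg hfg hL hN
    obtain ⟨a, p, hp, hkp⟩ := hL
    obtain ⟨b, q, hq, hkq⟩ := hN
    obtain ⟨l, hl⟩ := Module.projective_lifting_property g q hg
    set h0 : ((Fin a → R) × (Fin b → R)) →ₗ[R] M := LinearMap.coprod (f ∘ₗ p) l with hh0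
    have h0surj : Function.Surjective h0 := by
      intro m
      obtain ⟨y, hy⟩ := hq (g m)
      have : m - l y ∈ LinearMap.ker g := by
        simp only [LinearMap.mem_ker, map_sub]
        rw [show g (l y) = q y from congrArg (· y) (congrArg DFunLike.coe hl), hy, sub_self]
      rw [← hfg] at this
      obtain ⟨x', hx'⟩ := this
      obtain ⟨x, hx⟩ := hp x'
      refine ⟨(x, y), ?_⟩
      show f (p x) + l y = m
      rw [hx, hx', sub_add_cancel]
    set e : (Fin (a + b) → R) ≃ₗ[R] ((Fin a → R) × (Fin b → R)) :=
      (LinearEquiv.funCongrLeft R R finSumFinEquiv).trans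
        (LinearEquiv.sumArrowLequivProdArrow _ _ R R) with he
    refine ⟨a + b, h0 ∘ₗ e.toLinearMap, h0surj.comp e.surjective, ?_⟩
    -- kernel analysis
    set K := LinearMap.ker (h0 ∘ₗ (e : (Fin (a + b) → R) →ₗ[R] ((Fin a → R) × (Fin b → R))))
      with hK
    have memK : ∀ z : Fin (a + b) → R, z ∈ K ↔ f (p (e z).1) + l (e z).2 = 0 := by
      intro z
      exact Iff.rfl
    -- the three maps of the kernel sequence
    have hα_mem : ∀ x : LinearMap.ker p, (e.symm ((x : Fin a → R), 0)) ∈ K := by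
      rintro ⟨x, hx⟩
      rw [memK]
      simp [LinearMap.mem_ker.mp hx]
    have hβ_mem : ∀ z : Fin (a + b) → R, z ∈ K → (e z).2 ∈ LinearMap.ker q := by
      intro z hz
      rw [memK] at hz
      have h1 : l (e z).2 = -(f (p (e z).1)) := eq_neg_of_add_eq_zero_right hz
      have h2 : q (e z).2 = g (l (e z).2) :=
        (congrArg (· (e z).2) (congrArg DFunLike.coe hl)).symm
      rw [LinearMap.mem_ker, h2, h1, map_neg, neg_eq_zero]
      have : f (p (e z).1) ∈ LinearMap.ker g := by
        rw [← hfg]; exact ⟨p (e z).1, rfl⟩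
      exact this
    set α : LinearMap.ker p →ₗ[R] K :=
      LinearMap.codRestrict K
        (e.symm.toLinearMap ∘ₗ (LinearMap.inl R (Fin a → R) (Fin b → R)) ∘ₗ
          (LinearMap.ker p).subtype) (fun x => hα_mem x) with hα
    set β : K →ₗ[R] LinearMap.ker q :=
      LinearMap.codRestrict (LinearMap.ker q)
        ((LinearMap.snd R (Fin a → R) (Fin b → R)) ∘ₗ e.toLinearMap ∘ₗ K.subtype)
        (fun z => hβ_mem z z.2) with hβ
    have hαinj : Function.Injective α := by
      rw [← LinearMap.ker_eq_bot, hα]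
      refine (LinearMap.ker_codRestrict _ _ _).trans ?_
      rw [LinearMap.ker_eq_bot]
      intro u v huv
      simp only [LinearMap.comp_apply, LinearMap.inl_apply, Submodule.subtype_apply,
        LinearEquiv.coe_coe] at huv
      have := e.symm.injective huv
      exact Subtype.ext (congrArg Prod.fst this)
    have hβsurj : Function.Surjective β := by
      rintro ⟨y, hy⟩
      have : g (l y) = 0 := by
        rw [show g (l y) = q y from congrArg (· y) (congrArg DFunLike.coe hl)]
        exact hy
      have : l y ∈ LinearMap.range f := by rw [hfg]; exact this
      obtain ⟨x', hx'⟩ := this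
      obtain ⟨x, hx⟩ := hp x'
      have hzK : e.symm (-x, y) ∈ K := by
        rw [memK]
        simp only [LinearEquiv.apply_symm_apply, map_neg, hx, hx']
        abel
      refine ⟨⟨e.symm (-x, y), hzK⟩, ?_⟩
      apply Subtype.ext
      simp [hβ, LinearMap.codRestrict]
    have hrange : LinearMap.range α = LinearMap.ker β := by
      ext z
      constructor
      · rintro ⟨x, rfl⟩
        apply Subtype.ext
        simp [hα, hβ, LinearMap.codRestrict]
      · intro hz
        have h2 : (e (z : Fin (a + b) → R)).2 = 0 := by
          have := congrArg Subtype.val hz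
          simpa [hβ, LinearMap.codRestrict] using this
        have hz1 : (z : Fin (a + b) → R) ∈ K := z.2
        rw [memK, h2, map_zero, add_zero] at hz1
        have hp1 : p (e (z : Fin (a + b) → R)).1 = 0 := by
          apply hf; rw [hz1, map_zero]
        refine ⟨⟨(e (z : Fin (a + b) → R)).1, LinearMap.mem_ker.mpr hp1⟩, ?_⟩
        apply Subtype.ext
        simp only [hα, LinearMap.codRestrict, LinearMap.comp_apply, LinearMap.coe_mk,
          AddHom.coe_mk, Submodule.coe_subtype, LinearMap.coe_inl, LinearEquiv.coe_coe]
        rw [← h2]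
        exact congrArg e.symm (Prod.ext rfl rfl) |>.trans (e.symm_apply_apply _)
    exact ih (LinearMap.ker p) K (LinearMap.ker q) α β hαinj hβsurj hrange hkp hkq

theorem fp_of_ses_middle (R : Type u) [CommRing R] (L M N : Type u)
    [AddCommGroup L] [AddCommGroup M] [AddCommGroup N]
    [Module R L] [Module R M] [Module R N]
    (f : L →ₗ[R] M) (g : M →ₗ[R] N)
    (hf : Function.Injective f) (hg : Function.Surjective g)
    (hfg : LinearMap.range f = LinearMap.ker g) (n : ℕ)
    (hL : AB.IsFP R n (ModuleCat.of R L)) (hN : AB.IsFP R n (ModuleCat.of R N)) :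
    AB.IsFP R n (ModuleCat.of R M) := by
  exact fp_of_ses_aux R n L M N f g hf hg hfg hL hN
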